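/- The map $\sigma \mapsto S(\sigma)$ is a bijection between $d$-separable permutations of size $n$ and rooted plane trees with $n$ leaves in which every internal vertex is labeled by a sign sequence in $\{\pm1\}^{d-1}$, has at least two children, and has a sign sequence different from that of its parent (when the parent exists). -/

import Mathlib

/-!
Call `k` an `s`-split point of a permutation `σ` of size `n` if `σ` maps the first `k` positions,
in every coordinate `j`, onto the first `k` values (when `s j` is `+1`) or onto the last `k`
values (when `s j` is `-1`); thus `|σ₁|` is an `s`-split point of `σ₁ ⊕ₛ σ₂`.
A permutation cannot have proper split points for two different sign sequences: compare the
images of the first and of the last position in a coordinate where the signs differ.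

Hence a valid tree hanging below a vertex labeled `s` has no proper `s`-split point, and for an
`s`-vertex with valid children the size of the first child is the least positive `s`-split
point of its permutation. This reads off the root label and the first child of a valid tree
from its permutation, which gives injectivity by recursion. Surjectivity: for
`σ = σ₁ ⊕ₛ σ₂`, put the trees of `σ₁` and `σ₂` under a common root labeled `s`, merging a
child root labeled `s` into the new root.
-/

/-- A `(d+1)`-dimensional permutation of size `n`. -/
def IsDPerm {d n : ℕ} (σ : Fin n → Fin d → Fin n) : Prop :=
  ∀ j : Fin d, Function.Bijective fun i => σ i j

/-- The block sum `σ₁ ⊕ₛ σ₂` with sign sequence `s : Fin d → Bool` (`true` = `+1`). -/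
def blockSum {d n₁ n₂ : ℕ} (σ₁ : Fin n₁ → Fin d → Fin n₁) (σ₂ : Fin n₂ → Fin d → Fin n₂)
    (s : Fin d → Bool) : Fin (n₁ + n₂) → Fin d → Fin (n₁ + n₂) :=
  fun i j => Fin.addCases
    (fun i₁ => if s j then Fin.castAdd n₂ (σ₁ i₁ j) else Fin.addNat (σ₁ i₁ j) n₂)
    (fun i₂ => if s j then Fin.natAdd n₁ (σ₂ i₂ j)
      else Fin.castLE (Nat.le_add_left n₂ n₁) (σ₂ i₂ j)) i

/-- `(d+1)`-separable permutations. -/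
inductive IsSep (d : ℕ) : (n : ℕ) → (Fin n → Fin d → Fin n) → Prop
  | single (σ : Fin 1 → Fin d → Fin 1) : IsSep d 1 σ
  | sum {n₁ n₂ : ℕ} (σ₁ : Fin n₁ → Fin d → Fin n₁) (σ₂ : Fin n₂ → Fin d → Fin n₂)
      (s : Fin d → Bool) : IsSep d n₁ σ₁ → IsSep d n₂ σ₂ →
      IsSep d (n₁ + n₂) (blockSum σ₁ σ₂ s)

/-- Rooted plane trees whose internal vertices carry a sign sequence in `{±1}^d`
(`Fin d → Bool`) and an ordered list of subtrees. -/
inductive SignTree (d : ℕ) : Type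
  | leaf : SignTree d
  | node : (Fin d → Bool) → List (SignTree d) → SignTree d

mutual
  /-- Number of leaves of a sign tree. -/
  def numLeaves {d : ℕ} : SignTree d → ℕ
    | .leaf => 1
    | .node _ ts => numLeavesList ts
  def numLeavesList {d : ℕ} : List (SignTree d) → ℕ
    | [] => 0
    | t :: ts => numLeaves t + numLeavesList ts
end

mutual
  /-- The inverse map `S⁻¹`: the `(d+1)`-dimensional permutation encoded by a sign tree,
  obtained by block-summing the permutations of the subtrees at each internal vertex with
  its sign sequence. -/
  def treePerm {d : ℕ} : SignTree d → (n : ℕ) × (Fin n → Fin d → Fin n)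
    | .leaf => ⟨1, fun _ _ => 0⟩
    | .node s ts => treePermList s ts
  def treePermList {d : ℕ} (s : Fin d → Bool) :
      List (SignTree d) → (n : ℕ) × (Fin n → Fin d → Fin n)
    | [] => ⟨0, fun i _ => i⟩
    | t :: ts => ⟨(treePerm t).1 + (treePermList s ts).1,
        blockSum (treePerm t).2 (treePermList s ts).2 s⟩
end

mutual
  /-- Validity of a sign tree below a parent labeled `par` (`none` for the root): every
  internal vertex has at least two children and a sign sequence different from that of
  its parent. -/
  def ValidSign {d : ℕ} : Option (Fin d → Bool) → SignTree d → Prop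
    | _, .leaf => True
    | par, .node s ts => 2 ≤ ts.length ∧ par ≠ some s ∧ ValidSignList (some s) ts
  def ValidSignList {d : ℕ} : Option (Fin d → Bool) → List (SignTree d) → Prop
    | _, [] => True
    | par, t :: ts => ValidSign par t ∧ ValidSignList par ts
end

section

variable {d : ℕ}

abbrev SizedPerm (d : ℕ) := (m : ℕ) × (Fin m → Fin d → Fin m)

theorem SizedPerm.ext {n m : ℕ} {f : Fin n → Fin d → Fin n} {g : Fin m → Fin d → Fin m}
    (h : n = m) (hv : ∀ (i : Fin n) (j : Fin d), (f i j : ℕ) = g (Fin.cast h i) j) :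
    (⟨n, f⟩ : SizedPerm d) = ⟨m, g⟩ := by
  subst h
  have : f = g := funext fun i => funext fun j => Fin.ext (hv i j)
  rw [this]

theorem IsSep.one_le {n : ℕ} {σ : Fin n → Fin d → Fin n} (h : IsSep d n σ) : 1 ≤ n := by
  induction h <;> omega

variable {n₁ n₂ : ℕ}

theorem blockSum_val_left (f : Fin n₁ → Fin d → Fin n₁) (g : Fin n₂ → Fin d → Fin n₂)
    (s : Fin d → Bool) (i : Fin (n₁ + n₂)) (j : Fin d) (i₁ : Fin n₁) (hi : (i : ℕ) = i₁) :
    (blockSum f g s i j : ℕ) = if s j then (f i₁ j : ℕ) else f i₁ j + n₂ := by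
  obtain rfl : i = Fin.castAdd n₂ i₁ := Fin.ext hi
  simp only [blockSum, Fin.addCases_left]
  cases s j <;> simp

theorem blockSum_val_right (f : Fin n₁ → Fin d → Fin n₁) (g : Fin n₂ → Fin d → Fin n₂)
    (s : Fin d → Bool) (i : Fin (n₁ + n₂)) (j : Fin d) (i₂ : Fin n₂) (hi : (i : ℕ) = n₁ + i₂) :
    (blockSum f g s i j : ℕ) = if s j then n₁ + g i₂ j else (g i₂ j : ℕ) := by
  obtain rfl : i = Fin.natAdd n₁ i₂ := Fin.ext hi
  simp only [blockSum, Fin.addCases_right]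
  cases s j <;> simp

theorem blockSum_empty_right (f : Fin n₁ → Fin d → Fin n₁) (g : Fin 0 → Fin d → Fin 0)
    (s : Fin d → Bool) : blockSum f g s = f := by
  funext i j
  apply Fin.ext
  rw [blockSum_val_left f g s i j i rfl]
  split_ifs <;> omega

theorem blockSum_empty_left (f : Fin 0 → Fin d → Fin 0) (g : Fin n₂ → Fin d → Fin n₂)
    (s : Fin d → Bool) : (⟨0 + n₂, blockSum f g s⟩ : SizedPerm d) = ⟨n₂, g⟩ := by
  refine SizedPerm.ext (Nat.zero_add n₂) fun i j => ?_
  rw [blockSum_val_right f g s i j (Fin.cast (Nat.zero_add n₂) i) (by simp)]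
  split_ifs <;> simp

theorem blockSum_assoc {n₃ : ℕ} (f : Fin n₁ → Fin d → Fin n₁) (g : Fin n₂ → Fin d → Fin n₂)
    (h : Fin n₃ → Fin d → Fin n₃) (s : Fin d → Bool) :
    (⟨n₁ + (n₂ + n₃), blockSum f (blockSum g h s) s⟩ : SizedPerm d)
      = ⟨n₁ + n₂ + n₃, blockSum (blockSum f g s) h s⟩ := by
  refine SizedPerm.ext (Nat.add_assoc n₁ n₂ n₃).symm fun i j => ?_
  have hi : (Fin.cast (Nat.add_assoc n₁ n₂ n₃).symm i : ℕ) = i := rfl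
  have hlt := i.isLt
  rcases Nat.lt_or_ge i n₁ with h₁ | h₁
  · rw [blockSum_val_left f _ s i j ⟨i, h₁⟩ rfl,
      blockSum_val_left (blockSum f g s) h s _ j ⟨i, by omega⟩ hi,
      blockSum_val_left f g s _ j ⟨i, h₁⟩ rfl]
    split_ifs <;> omega
  rcases Nat.lt_or_ge i (n₁ + n₂) with h₂ | h₂
  · rw [blockSum_val_right f _ s i j ⟨i - n₁, by omega⟩ (by simp; omega),
      blockSum_val_left (blockSum f g s) h s _ j ⟨i, by omega⟩ hi,
      blockSum_val_left g h s _ j ⟨i - n₁, by omega⟩ rfl,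
      blockSum_val_right f g s _ j ⟨i - n₁, by omega⟩ (by simp; omega)]
    split_ifs <;> omega
  · rw [blockSum_val_right f _ s i j ⟨i - n₁, by omega⟩ (by simp; omega),
      blockSum_val_right (blockSum f g s) h s _ j ⟨i - (n₁ + n₂), by omega⟩ (by simp; omega),
      blockSum_val_right g h s _ j ⟨i - (n₁ + n₂), by omega⟩ (by simp; omega)]
    split_ifs <;> omega

theorem blockSum_inj {f f' : Fin n₁ → Fin d → Fin n₁} {g g' : Fin n₂ → Fin d → Fin n₂}
    {s : Fin d → Bool} (h : blockSum f g s = blockSum f' g' s) : f = f' ∧ g = g' := by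
  constructor
  · funext i j
    have hv := congrArg (fun σ => (σ (Fin.castAdd n₂ i) j : ℕ)) h
    rw [blockSum_val_left f g s _ j i (by simp), blockSum_val_left f' g' s _ j i (by simp)] at hv
    apply Fin.ext
    split_ifs at hv <;> omega
  · funext i j
    have hv := congrArg (fun σ => (σ (Fin.natAdd n₁ i) j : ℕ)) h
    rw [blockSum_val_right f g s _ j i (by simp), blockSum_val_right f' g' s _ j i (by simp)]
      at hv
    apply Fin.ext
    split_ifs at hv <;> omega

theorem blockSum_sigma_inj {n₁' n₂' : ℕ} {f : Fin n₁ → Fin d → Fin n₁}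
    {g : Fin n₂ → Fin d → Fin n₂} {f' : Fin n₁' → Fin d → Fin n₁'}
    {g' : Fin n₂' → Fin d → Fin n₂'} {s : Fin d → Bool} (h₁ : n₁ = n₁')
    (h : (⟨n₁ + n₂, blockSum f g s⟩ : SizedPerm d) = ⟨n₁' + n₂', blockSum f' g' s⟩) :
    (⟨n₁, f⟩ : SizedPerm d) = ⟨n₁', f'⟩ ∧ (⟨n₂, g⟩ : SizedPerm d) = ⟨n₂', g'⟩ := by
  subst h₁
  obtain rfl : n₂ = n₂' := by have := congrArg Sigma.fst h; simp only at this; omega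
  obtain ⟨rfl, rfl⟩ := blockSum_inj (eq_of_heq (Sigma.mk.inj_iff.mp h).2)
  exact ⟨rfl, rfl⟩

def IsSplitPoint {n : ℕ} (σ : Fin n → Fin d → Fin n) (s : Fin d → Bool) (k : ℕ) : Prop :=
  ∀ (i : Fin n) (j : Fin d), (i : ℕ) < k ↔ if s j then (σ i j : ℕ) < k else n ≤ σ i j + k

theorem isSplitPoint_blockSum (f : Fin n₁ → Fin d → Fin n₁) (g : Fin n₂ → Fin d → Fin n₂)
    (s : Fin d → Bool) : IsSplitPoint (blockSum f g s) s n₁ := by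
  intro i j
  rcases Nat.lt_or_ge i n₁ with h | h
  · rw [blockSum_val_left f g s i j ⟨i, h⟩ rfl]
    have := (f ⟨i, h⟩ j).isLt
    split_ifs <;> omega
  · have hlt := i.isLt
    rw [blockSum_val_right f g s i j ⟨i - n₁, by omega⟩ (by simp; omega)]
    have := (g ⟨i - n₁, by omega⟩ j).isLt
    split_ifs <;> omega

theorem IsSplitPoint.of_blockSum {f : Fin n₁ → Fin d → Fin n₁} {g : Fin n₂ → Fin d → Fin n₂}
    {s : Fin d → Bool} {k : ℕ} (h : IsSplitPoint (blockSum f g s) s k) :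
    IsSplitPoint f s k := by
  intro i j
  have hi := h (Fin.castAdd n₂ i) j
  rw [blockSum_val_left f g s _ j i (by simp), Fin.val_castAdd] at hi
  split_ifs at hi ⊢ <;> omega

theorem IsSplitPoint.sign_eq {n : ℕ} {σ : Fin n → Fin d → Fin n} {s t : Fin d → Bool}
    {k m : ℕ} (hs : IsSplitPoint σ s k) (ht : IsSplitPoint σ t m)
    (hk₀ : 0 < k) (hk : k < n) (hm₀ : 0 < m) (hm : m < n) : s = t := by
  funext j
  have hs₀ := hs ⟨0, by omega⟩ j
  have ht₀ := ht ⟨0, by omega⟩ j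
  have hs₁ := hs ⟨n - 1, by omega⟩ j
  have ht₁ := ht ⟨n - 1, by omega⟩ j
  have := (σ ⟨0, by omega⟩ j).isLt
  have := (σ ⟨n - 1, by omega⟩ j).isLt
  revert hs₀ ht₀ hs₁ ht₁
  cases s j <;> cases t j <;> simp only [Bool.false_eq_true, if_false, if_true, implies_true] <;>
    omega

end

section

variable {d : ℕ}

theorem treePermList_singleton (s : Fin d → Bool) (t : SignTree d) :
    treePermList s [t] = treePerm t :=
  congrArg (Sigma.mk (treePerm t).1) (blockSum_empty_right (treePerm t).2 _ s)

theorem treePermList_append (s : Fin d → Bool) (l₁ l₂ : List (SignTree d)) :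
    treePermList s (l₁ ++ l₂) = ⟨(treePermList s l₁).1 + (treePermList s l₂).1,
      blockSum (treePermList s l₁).2 (treePermList s l₂).2 s⟩ := by
  induction l₁ with
  | nil => exact (blockSum_empty_left _ _ s).symm
  | cons t l₁ ih =>
    change (⟨_, blockSum (treePerm t).2 (treePermList s (l₁ ++ l₂)).2 s⟩ : SizedPerm d) = _
    rw [ih]
    exact blockSum_assoc _ _ _ s

mutual

theorem size_treePerm (T : SignTree d) : (treePerm T).1 = numLeaves T := by
  cases T with
  | leaf => rfl
  | node s ts => exact size_treePermList s ts

theorem size_treePermList (s : Fin d → Bool) (ts : List (SignTree d)) :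
    (treePermList s ts).1 = numLeavesList ts := by
  cases ts with
  | nil => rfl
  | cons t ts =>
    change (treePerm t).1 + (treePermList s ts).1 = numLeaves t + numLeavesList ts
    rw [size_treePerm t, size_treePermList s ts]

end

mutual

theorem ValidSign.isSep {par : Option (Fin d → Bool)} {T : SignTree d} (h : ValidSign par T) :
    IsSep d (treePerm T).1 (treePerm T).2 := by
  cases T with
  | leaf => exact .single _
  | node s ts =>
    obtain ⟨hlen, -, hts⟩ := h
    cases ts with
    | nil => simp at hlen
    | cons t ts => exact ValidSignList.isSep hts
termination_by sizeOf T

theorem ValidSignList.isSep {s : Fin d → Bool} {t : SignTree d} {ts : List (SignTree d)}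
    (h : ValidSignList (some s) (t :: ts)) :
    IsSep d (treePermList s (t :: ts)).1 (treePermList s (t :: ts)).2 := by
  cases ts with
  | nil => rw [treePermList_singleton]; exact h.1.isSep
  | cons u us => exact .sum _ _ s h.1.isSep h.2.isSep
termination_by sizeOf (t :: ts)

end

theorem ValidSign.one_le_size {par : Option (Fin d → Bool)} {T : SignTree d}
    (h : ValidSign par T) : 1 ≤ (treePerm T).1 :=
  h.isSep.one_le

theorem ValidSignList.one_le_size {s : Fin d → Bool} {t : SignTree d} {ts : List (SignTree d)}
    (h : ValidSignList (some s) (t :: ts)) : 1 ≤ (treePermList s (t :: ts)).1 :=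
  h.isSep.one_le

theorem ValidSign.exists_isSplitPoint {par : Option (Fin d → Bool)} {s : Fin d → Bool}
    {ts : List (SignTree d)} (h : ValidSign par (.node s ts)) :
    ∃ k, 0 < k ∧ k < (treePerm (.node s ts)).1 ∧ IsSplitPoint (treePerm (.node s ts)).2 s k := by
  obtain ⟨hlen, -, hts⟩ := h
  match ts, hlen, hts with
  | t :: u :: us, _, hts =>
    have ht := hts.1.one_le_size
    have hus := hts.2.one_le_size
    exact ⟨(treePerm t).1, ht, by change _ < _ + _; omega, isSplitPoint_blockSum _ _ s⟩

theorem ValidSign.not_isSplitPoint {s : Fin d → Bool} {T : SignTree d}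
    (h : ValidSign (some s) T) {k : ℕ} (hk₀ : 0 < k) (hk : k < (treePerm T).1) :
    ¬ IsSplitPoint (treePerm T).2 s k := by
  cases T with
  | leaf => change k < 1 at hk; omega
  | node s' ts =>
    intro hsplit
    obtain ⟨k', hk'₀, hk', hsplit'⟩ := h.exists_isSplitPoint
    exact h.2.1 (congrArg some (hsplit.sign_eq hsplit' hk₀ hk hk'₀ hk'))

theorem ValidSignList.size_le_of_isSplitPoint {s : Fin d → Bool} {t : SignTree d}
    {ts : List (SignTree d)} (h : ValidSignList (some s) (t :: ts)) {k : ℕ} (hk₀ : 0 < k)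
    (hsplit : IsSplitPoint (treePermList s (t :: ts)).2 s k) : (treePerm t).1 ≤ k :=
  not_lt.mp fun hk => h.1.not_isSplitPoint hk₀ hk hsplit.of_blockSum

mutual

theorem ValidSign.treePerm_injective {par par' : Option (Fin d → Bool)} {T T' : SignTree d}
    (h : ValidSign par T) (h' : ValidSign par' T') (he : treePerm T = treePerm T') :
    T = T' := by
  cases T with
  | leaf =>
    cases T' with
    | leaf => rfl
    | node s' ts' =>
      obtain ⟨k, hk₀, hk, -⟩ := h'.exists_isSplitPoint
      rw [← he] at hk
      change k < 1 at hk
      omega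
  | node s ts =>
    obtain ⟨k, hk₀, hk, hsplit⟩ := h.exists_isSplitPoint
    cases T' with
    | leaf => rw [he] at hk; change k < 1 at hk; omega
    | node s' ts' =>
      obtain ⟨k', hk'₀, hk', hsplit'⟩ := h'.exists_isSplitPoint
      rw [← he] at hk' hsplit'
      obtain rfl := hsplit.sign_eq hsplit' hk₀ hk hk'₀ hk'
      rw [ValidSignList.treePermList_injective h.2.2 h'.2.2 he]

theorem ValidSignList.treePermList_injective {s : Fin d → Bool} {ts ts' : List (SignTree d)}
    (h : ValidSignList (some s) ts) (h' : ValidSignList (some s) ts')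
    (he : treePermList s ts = treePermList s ts') : ts = ts' := by
  cases ts with
  | nil =>
    cases ts' with
    | nil => rfl
    | cons t' us' => have := h'.one_le_size; rw [← he] at this; change 1 ≤ 0 at this; omega
  | cons t us =>
    cases ts' with
    | nil => have := h.one_le_size; rw [he] at this; change 1 ≤ 0 at this; omega
    | cons t' us' =>
      -- both head sizes are the least positive `s`-split point of the same permutation
      have hsplit := isSplitPoint_blockSum (treePerm t).2 (treePermList s us).2 s
      have hsplit' := isSplitPoint_blockSum (treePerm t').2 (treePermList s us').2 s
      change IsSplitPoint (treePermList s (t :: us)).2 s _ at hsplit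
      change IsSplitPoint (treePermList s (t' :: us')).2 s _ at hsplit'
      rw [← he] at hsplit'
      rw [he] at hsplit
      have hsize := le_antisymm (h.size_le_of_isSplitPoint h'.1.one_le_size hsplit')
        (h'.size_le_of_isSplitPoint h.1.one_le_size hsplit)
      obtain ⟨hhead, htail⟩ := blockSum_sigma_inj hsize he
      rw [h.1.treePerm_injective h'.1 hhead, h.2.treePermList_injective h'.2 htail]

end

def childrenUnder (s : Fin d → Bool) : SignTree d → List (SignTree d)
  | .leaf => [.leaf]
  | .node s' ts => if s' = s then ts else [.node s' ts]

theorem treePermList_childrenUnder (s : Fin d → Bool) (T : SignTree d) :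
    treePermList s (childrenUnder s T) = treePerm T := by
  cases T with
  | leaf => exact treePermList_singleton s _
  | node s' ts =>
    by_cases hs : s' = s
    · subst hs
      simp only [childrenUnder, if_true]
      rfl
    · simp only [childrenUnder, if_neg hs]
      exact treePermList_singleton s _

theorem ValidSign.childrenUnder_ne_nil (s : Fin d → Bool) {par : Option (Fin d → Bool)}
    {T : SignTree d} (h : ValidSign par T) : childrenUnder s T ≠ [] := by
  cases T with
  | leaf => simp [childrenUnder]
  | node s' ts =>
    by_cases hs : s' = s
    · subst hs
      simp only [childrenUnder, if_true]
      rintro rfl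
      exact absurd h.1 (by simp)
    · simp [childrenUnder, hs]

theorem ValidSign.validSignList_childrenUnder (s : Fin d → Bool) {T : SignTree d}
    (h : ValidSign none T) : ValidSignList (some s) (childrenUnder s T) := by
  cases T with
  | leaf => exact ⟨trivial, trivial⟩
  | node s' ts =>
    obtain ⟨hlen, -, hts⟩ := h
    by_cases hs : s' = s
    · subst hs
      simpa only [childrenUnder, if_true] using hts
    · simp only [childrenUnder, if_neg hs]
      exact ⟨⟨hlen, fun h => hs (Option.some.inj h).symm, hts⟩, trivial⟩

theorem ValidSignList.append {par : Option (Fin d → Bool)} {l₁ l₂ : List (SignTree d)}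
    (h₁ : ValidSignList par l₁) (h₂ : ValidSignList par l₂) : ValidSignList par (l₁ ++ l₂) := by
  induction l₁ with
  | nil => exact h₂
  | cons t l₁ ih => exact ⟨h₁.1, ih h₁.2⟩

theorem IsSep.exists_validSign {n : ℕ} {σ : Fin n → Fin d → Fin n} (h : IsSep d n σ) :
    ∃ T : SignTree d, ValidSign none T ∧ treePerm T = ⟨n, σ⟩ := by
  induction h with
  | single σ =>
    refine ⟨.leaf, trivial, SizedPerm.ext rfl fun i j => ?_⟩
    have := (σ i j).isLt
    change 0 = _
    omega
  | sum σ₁ σ₂ s _ _ ih₁ ih₂ =>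
    obtain ⟨T₁, hT₁, he₁⟩ := ih₁
    obtain ⟨T₂, hT₂, he₂⟩ := ih₂
    refine ⟨.node s (childrenUnder s T₁ ++ childrenUnder s T₂), ⟨?_, by simp, ?_⟩, ?_⟩
    · have := List.length_pos_of_ne_nil (hT₁.childrenUnder_ne_nil s)
      have := List.length_pos_of_ne_nil (hT₂.childrenUnder_ne_nil s)
      rw [List.length_append]
      omega
    · exact (hT₁.validSignList_childrenUnder s).append (hT₂.validSignList_childrenUnder s)
    · change treePermList s _ = _
      rw [treePermList_append, treePermList_childrenUnder, treePermList_childrenUnder, he₁, he₂]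

end

/-- The encoding of `(d+1)`-separable permutations by sign trees is a bijection: the map
`S⁻¹` is a bijection from sign trees with `n` leaves (internal vertices labeled by sign
sequences, with at least two children, and label different from the parent's) onto
`(d+1)`-separable permutations of size `n`. -/
theorem sign_tree_bijection (d n : ℕ) :
    Set.BijOn (fun T => treePerm T)
      {T : SignTree d | ValidSign none T ∧ numLeaves T = n}
      {p : (m : ℕ) × (Fin m → Fin d → Fin m) | p.1 = n ∧ IsSep d p.1 p.2} := by
  refine ⟨?_, ?_, ?_⟩
  · rintro T ⟨hT, rfl⟩
    exact ⟨size_treePerm T, hT.isSep⟩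
  · rintro T ⟨hT, -⟩ T' ⟨hT', -⟩ he
    exact hT.treePerm_injective hT' he
  · rintro ⟨m, σ⟩ ⟨rfl, hσ⟩
    obtain ⟨T, hT, he⟩ := hσ.exists_validSign
    refine ⟨T, ⟨hT, ?_⟩, he⟩
    rw [← size_treePerm, he]
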